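/- For any z₀ > 0, there exist R > 0 and a function z ∈ C¹([0,R]) with z(0) = z₀, z'(0) = 0 that is a fixed point of the operator (Tz)(r) = z₀ + ∫₀^r φ⁻¹( (1/s) ∫₀^s t g(z(t), z'(t)) dt ) ds, where g(x,y) = 2(1-x)/(x²√(1+y²)) and φ⁻¹(x) = x/√(1-x²); consequently z solves (r z'/√(1+z'²))' = 2r(1-z)/(z²√(1+z'²)) on (0,R]. -/

import Mathlib

open Real intervalIntegral

/-- `g(x,y) = 2(1-x)/(x²√(1+y²))`. -/
noncomputable def horoG (x y : ℝ) : ℝ :=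
  2 * (1 - x) / (x ^ 2 * Real.sqrt (1 + y ^ 2))

/-- `φ⁻¹(x) = x/√(1-x²)`. -/
noncomputable def phiInv (x : ℝ) : ℝ := x / Real.sqrt (1 - x ^ 2)

/-!
Put `w = z'` and `φ(y) = y / √(1 + y²)`. The equation says `φ(w(s)) = (1/s) ∫₀^s t g(z, w) dt`,
and the right-hand side is `O(s)`, so for small radii it stays in `[-1/2, 1/2]`, where `φ⁻¹` is
Lipschitz. Replacing `g` by a bounded, globally Lipschitz function that agrees with it on a ball
around `(z₀, 0)`, the map `(z, w) ↦ (z₀ + ∫₀^r φ⁻¹(mean), φ⁻¹(mean))` becomes a contraction of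
`C([0, R], ℝ × ℝ)` with constant `O(R)`. Its fixed point never leaves the ball, so it solves the
original equation, and differentiating `r φ(z'(r)) = ∫₀^r t g dt` gives the ODE.
-/

open Set Filter Topology Metric Function
open scoped NNReal

lemma phiInv_zero : phiInv 0 = 0 := by simp [phiInv]

lemma sqrt_one_sub_sq_pos {x : ℝ} (hx : |x| < 1) : 0 < √(1 - x ^ 2) :=
  Real.sqrt_pos.2 (by nlinarith [abs_nonneg x, sq_abs x])

lemma phiInv_div_sqrt_one_add_sq {x : ℝ} (hx : |x| < 1) :
    phiInv x / √(1 + phiInv x ^ 2) = x := by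
  have hd := sqrt_one_sub_sq_pos hx
  have hd2 : √(1 - x ^ 2) ^ 2 = 1 - x ^ 2 := Real.sq_sqrt (by nlinarith [abs_nonneg x, sq_abs x])
  have h1 : 1 + phiInv x ^ 2 = (√(1 - x ^ 2))⁻¹ ^ 2 := by
    rw [phiInv]
    field_simp
    linarith
  rw [h1, Real.sqrt_sq (by positivity), phiInv]
  field_simp

lemma abs_phiInv_le {x : ℝ} (hx : |x| ≤ 1 / 2) : |phiInv x| ≤ 2 * |x| := by
  have h2 : 1 / 2 ≤ √(1 - x ^ 2) :=
    Real.le_sqrt_of_sq_le (by nlinarith [sq_abs x, abs_nonneg x])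
  rw [phiInv, abs_div, abs_of_pos (by linarith : (0 : ℝ) < √(1 - x ^ 2)),
    div_le_iff₀ (by linarith)]
  nlinarith [abs_nonneg x]

lemma contDiffOn_phiInv {n : WithTop ℕ∞} : ContDiffOn ℝ n phiInv (Ioo (-1) 1) := fun x hx => by
  have hx' : |x| < 1 := abs_lt.2 hx
  have hpos : 0 < 1 - x ^ 2 := by nlinarith [abs_nonneg x, sq_abs x]
  refine ContDiffAt.contDiffWithinAt ?_
  exact contDiffAt_id.div ((contDiffAt_const.sub (contDiffAt_id.pow 2)).sqrt hpos.ne')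
    (sqrt_one_sub_sq_pos hx').ne'

lemma contDiffOn_uncurry_horoG {n : WithTop ℕ∞} :
    ContDiffOn ℝ n (uncurry horoG) {q | q.1 ≠ 0} := fun q hq => by
  have hsqrt : 0 < √(1 + q.2 ^ 2) := Real.sqrt_pos.2 (by positivity)
  refine ContDiffAt.contDiffWithinAt ?_
  unfold uncurry horoG
  exact ContDiffAt.div (by fun_prop)
    ((contDiffAt_fst.pow 2).mul ((contDiffAt_const.add (contDiffAt_snd.pow 2)).sqrt
      (by positivity))) (mul_ne_zero (pow_ne_zero _ hq) hsqrt.ne')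

theorem LipschitzOnWith.exists_lipschitzWith_abs_le_eqOn {α : Type*} [PseudoMetricSpace α]
    {f : α → ℝ} {s : Set α} {K : ℝ≥0} {M : ℝ} (hf : LipschitzOnWith K f s) (hM₀ : 0 ≤ M)
    (hM : ∀ x ∈ s, |f x| ≤ M) :
    ∃ G : α → ℝ, LipschitzWith K G ∧ (∀ x, |G x| ≤ M) ∧ EqOn f G s := by
  obtain ⟨G, hG, hfG⟩ := hf.extend_real
  refine ⟨fun x => max (-M) (min M (G x)), (hG.const_min M).const_max (-M), fun x => ?_,
    fun x hx => ?_⟩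
  · exact abs_le.2 ⟨le_max_left _ _, max_le (by linarith) (min_le_left _ _)⟩
  · obtain ⟨h₁, h₂⟩ := abs_le.1 (hM x hx)
    simp only [← hfG hx, min_eq_right h₂, max_eq_right h₁]

theorem ContDiffOn.exists_lipschitzWith_abs_le_eqOn {E : Type*} [NormedAddCommGroup E]
    [NormedSpace ℝ E] {f : E → ℝ} {s : Set E} (hf : ContDiffOn ℝ 1 f s) (hs : Convex ℝ s)
    (hs' : IsCompact s) :
    ∃ (G : E → ℝ) (M : ℝ) (L : ℝ≥0), LipschitzWith L G ∧ (∀ x, |G x| ≤ M) ∧ EqOn f G s := by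
  obtain ⟨L, hL⟩ := hf.exists_lipschitzOnWith one_ne_zero hs hs'
  obtain ⟨M, hM⟩ := hs'.exists_bound_of_continuousOn hf.continuousOn
  obtain ⟨G, hG⟩ := hL.exists_lipschitzWith_abs_le_eqOn (le_max_right M 0)
    fun x hx => (hM x hx).trans (le_max_left M 0)
  exact ⟨G, max M 0, L, hG⟩

lemma eventually_nhdsGT_zero_mul_lt (c : ℝ) {d : ℝ} (hd : 0 < d) :
    ∀ᶠ R in 𝓝[>] (0 : ℝ), c * R < d :=
  nhdsWithin_le_nhds <|
    ((continuous_const_mul c).tendsto' 0 0 (mul_zero c)).eventually_lt_const hd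

-- At `s = 0` the convention `1 / 0 = 0` gives `0`, which is also the limit.
noncomputable def radialMean (h : ℝ → ℝ) (s : ℝ) : ℝ := 1 / s * ∫ t in (0 : ℝ)..s, t * h t

section radialMean

variable {h k : ℝ → ℝ}

@[simp] lemma radialMean_zero (h : ℝ → ℝ) : radialMean h 0 = 0 := by simp [radialMean]

lemma radialMean_congr {s : ℝ} (hhk : EqOn h k (uIcc 0 s)) : radialMean h s = radialMean k s := by
  unfold radialMean
  congr 1
  exact integral_congr fun t ht => by simp only [hhk ht]

lemma abs_radialMean_le {C : ℝ} (hC : ∀ t, |h t| ≤ C) (s : ℝ) : |radialMean h s| ≤ C * |s| := by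
  rcases eq_or_ne s 0 with rfl | hs
  · simp
  have hint : ‖∫ t in (0 : ℝ)..s, t * h t‖ ≤ |s| * C * |s - 0| := by
    refine norm_integral_le_of_norm_le_const fun t ht => ?_
    have ht' := abs_sub_left_of_mem_uIcc (uIoc_subset_uIcc ht)
    rw [sub_zero, sub_zero] at ht'
    rw [Real.norm_eq_abs, abs_mul]
    exact mul_le_mul ht' (hC t) (abs_nonneg _) (abs_nonneg _)
  rw [Real.norm_eq_abs, sub_zero] at hint
  rw [radialMean, abs_mul, abs_div, abs_one, div_mul_eq_mul_div, one_mul,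
    div_le_iff₀ (abs_pos.2 hs)]
  linarith

lemma abs_radialMean_le_of_mem_Icc {C R s : ℝ} (hC : ∀ t, |h t| ≤ C) (hs : s ∈ Icc 0 R) :
    |radialMean h s| ≤ C * R := by
  have hC₀ : 0 ≤ C := (abs_nonneg _).trans (hC 0)
  refine (abs_radialMean_le hC s).trans ?_
  rw [abs_of_nonneg hs.1]
  exact mul_le_mul_of_nonneg_left hs.2 hC₀

lemma radialMean_sub (hh : Continuous h) (hk : Continuous k) (s : ℝ) :
    radialMean h s - radialMean k s = radialMean (fun t => h t - k t) s := by
  have hh' : Continuous fun t => t * h t := continuous_id.mul hh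
  have hk' : Continuous fun t => t * k t := continuous_id.mul hk
  rw [radialMean, radialMean, radialMean, ← mul_sub,
    ← integral_sub (hh'.intervalIntegrable 0 s) (hk'.intervalIntegrable 0 s)]
  simp only [mul_sub]

lemma continuous_radialMean (hh : Continuous h) {C : ℝ} (hC : ∀ t, |h t| ≤ C) :
    Continuous (radialMean h) := by
  refine continuous_iff_continuousAt.2 fun s => ?_
  rcases eq_or_ne s 0 with rfl | hs
  · have hbound : Tendsto (fun s => C * |s|) (𝓝 0) (𝓝 0) :=
      (continuous_const.mul continuous_abs).tendsto' 0 0 (by simp)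
    simpa [ContinuousAt] using squeeze_zero_norm (abs_radialMean_le hC) hbound
  · have hf : Continuous fun t => t * h t := continuous_id.mul hh
    exact (continuousAt_const.div continuousAt_id hs).mul
      (hf.integral_hasStrictDerivAt 0 s).hasDerivAt.continuousAt

lemma hasDerivAt_mul_radialMean (hh : Continuous h) {s : ℝ} (hs : s ≠ 0) :
    HasDerivAt (fun σ => σ * radialMean h σ) (s * h s) s := by
  have hf : Continuous fun t => t * h t := continuous_id.mul hh
  refine (hf.integral_hasStrictDerivAt 0 s).hasDerivAt.congr_of_eventuallyEq ?_
  filter_upwards [isOpen_ne.mem_nhds hs] with σ hσ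
  rw [radialMean, ← mul_assoc, mul_one_div_cancel hσ, one_mul]

end radialMean

theorem exists_fixedPoint_primitive_prod {R : ℝ} (hR : R ≤ 1) (z₀ : ℝ)
    (Φ : C(Icc (0 : ℝ) R, ℝ × ℝ) → ℝ → ℝ) (hΦ : ∀ f, Continuous (Φ f)) {κ : ℝ≥0} (hκ : κ < 1)
    (hΦκ : ∀ f g s, dist (Φ f s) (Φ g s) ≤ κ * dist f g) :
    ∃ f : C(Icc (0 : ℝ) R, ℝ × ℝ), ∀ p, f p = (z₀ + ∫ s in (0 : ℝ)..p, Φ f s, Φ f p) := by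
  let T : C(Icc (0 : ℝ) R, ℝ × ℝ) → C(Icc (0 : ℝ) R, ℝ × ℝ) := fun f =>
    ⟨fun p => (z₀ + ∫ s in (0 : ℝ)..p, Φ f s, Φ f p),
      ((continuous_const.add (continuous_primitive (hΦ f).intervalIntegrable 0)).prodMk
        (hΦ f)).comp continuous_subtype_val⟩
  have hT : LipschitzWith κ T := LipschitzWith.of_dist_le_mul fun f g => by
    refine (ContinuousMap.dist_le (by positivity)).2 fun p => ?_
    have hp : |(p : ℝ) - 0| ≤ 1 := by
      rw [sub_zero, abs_of_nonneg p.2.1]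
      exact p.2.2.trans hR
    have hint : ‖∫ s in (0 : ℝ)..p, (Φ f s - Φ g s)‖ ≤ κ * dist f g * |(p : ℝ) - 0| :=
      norm_integral_le_of_norm_le_const fun s _ => hΦκ f g s
    rw [integral_sub ((hΦ f).intervalIntegrable _ _) ((hΦ g).intervalIntegrable _ _)] at hint
    refine (Prod.dist_eq ..).trans_le (max_le ?_ (hΦκ f g p))
    rw [Real.dist_eq]
    change |z₀ + _ - (z₀ + _)| ≤ _
    rw [add_sub_add_left_eq_sub, ← Real.norm_eq_abs]
    exact hint.trans (mul_le_of_le_one_right (by positivity) hp)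
  obtain ⟨f, hf⟩ : ∃ f, IsFixedPt T f := ⟨_, (ContractingWith.fixedPoint_isFixedPt ⟨hκ, hT⟩)⟩
  exact ⟨f, fun p => (DFunLike.congr_fun hf p).symm⟩

-- Clamping the radius to `[0, R]` keeps the mean in `[-1/2, 1/2]` once `M * R ≤ 1 / 2`, where
-- `phiInv` is Lipschitz; this makes the slope continuous on all of `ℝ`.
noncomputable def radialSlope (G : ℝ × ℝ → ℝ) {R : ℝ} (hR : 0 ≤ R) (f : C(Icc (0 : ℝ) R, ℝ × ℝ))
    (s : ℝ) : ℝ :=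
  phiInv (radialMean (fun t => G (IccExtend hR f t)) (projIcc 0 R hR s))

section radialSlope

variable {G : ℝ × ℝ → ℝ} {M : ℝ} (hGM : ∀ q, |G q| ≤ M) {R : ℝ} (hR : 0 ≤ R)
  (hMR : M * R ≤ 1 / 2)
include hGM hMR

lemma abs_radialMean_projIcc_le (f : C(Icc (0 : ℝ) R, ℝ × ℝ)) (s : ℝ) :
    |radialMean (fun t => G (IccExtend hR f t)) (projIcc 0 R hR s)| ≤ 1 / 2 :=
  (abs_radialMean_le_of_mem_Icc (fun _ => hGM _) (projIcc 0 R hR s).2).trans hMR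

lemma continuous_radialSlope (hG : Continuous G) (f : C(Icc (0 : ℝ) R, ℝ × ℝ)) :
    Continuous (radialSlope G hR f) := by
  have hphi : ContinuousOn phiInv (Icc (-(1 / 2)) (1 / 2)) :=
    (contDiffOn_phiInv (n := 0)).continuousOn.mono (Icc_subset_Ioo (by norm_num) (by norm_num))
  have hGf : Continuous fun t => G (IccExtend hR f t) :=
    hG.comp (f.continuous.Icc_extend' (h := hR))
  have hmean := continuous_radialMean hGf fun _ => hGM _
  exact hphi.comp_continuous (hmean.comp (continuous_subtype_val.comp continuous_projIcc))
    fun s => abs_le.1 (abs_radialMean_projIcc_le hGM hR hMR f s)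

lemma dist_radialSlope_le {L K : ℝ≥0} (hGL : LipschitzWith L G)
    (hK : LipschitzOnWith K phiInv (Icc (-(1 / 2)) (1 / 2))) (f g : C(Icc (0 : ℝ) R, ℝ × ℝ))
    (s : ℝ) : dist (radialSlope G hR f s) (radialSlope G hR g s) ≤ K * L * R * dist f g := by
  have hσ := (projIcc 0 R hR s).2
  have hdiff : ∀ t, |G (IccExtend hR f t) - G (IccExtend hR g t)| ≤ L * dist f g := fun t => by
    rw [← Real.dist_eq]
    exact (hGL.dist_le_mul _ _).trans
      (mul_le_mul_of_nonneg_left (ContinuousMap.dist_apply_le_dist _) L.2)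
  have hmean := abs_radialMean_le hdiff (projIcc 0 R hR s)
  have hcont (f : C(Icc (0 : ℝ) R, ℝ × ℝ)) : Continuous fun t => G (IccExtend hR f t) :=
    hGL.continuous.comp (f.continuous.Icc_extend' (h := hR))
  rw [← radialMean_sub (hcont f) (hcont g), abs_of_nonneg hσ.1, ← Real.dist_eq] at hmean
  calc dist (radialSlope G hR f s) (radialSlope G hR g s)
      ≤ K * dist (radialMean (fun t => G (IccExtend hR f t)) (projIcc 0 R hR s))
          (radialMean (fun t => G (IccExtend hR g t)) (projIcc 0 R hR s)) :=
        hK.dist_le_mul _ (abs_le.1 (abs_radialMean_projIcc_le hGM hR hMR f s))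
          _ (abs_le.1 (abs_radialMean_projIcc_le hGM hR hMR g s))
    _ ≤ K * (L * dist f g * R) := by gcongr; exact hmean.trans (by gcongr; exact hσ.2)
    _ = K * L * R * dist f g := by ring

end radialSlope

theorem eventually_exists_radialSlope_solution {G : ℝ × ℝ → ℝ} {M : ℝ} {L : ℝ≥0}
    (hGM : ∀ q, |G q| ≤ M) (hGL : LipschitzWith L G) (z₀ : ℝ) :
    ∀ᶠ R in 𝓝[>] (0 : ℝ), ∃ F : ℝ → ℝ, Continuous F ∧ ∀ s ∈ Icc 0 R,
      F s = phiInv (radialMean (fun t => G (z₀ + ∫ τ in (0 : ℝ)..t, F τ, F t)) s) := by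
  obtain ⟨K, hK⟩ := (contDiffOn_phiInv.mono (Icc_subset_Ioo (by norm_num) (by norm_num))
    ).exists_lipschitzOnWith one_ne_zero (convex_Icc (-(1 / 2) : ℝ) (1 / 2)) isCompact_Icc
  filter_upwards [self_mem_nhdsWithin, eventually_nhdsGT_zero_mul_lt 1 one_pos,
    eventually_nhdsGT_zero_mul_lt M one_half_pos, eventually_nhdsGT_zero_mul_lt (K * L) one_pos]
    with R (hR : 0 < R) hR1 hMR hκ
  rw [one_mul] at hR1
  obtain ⟨f, hf⟩ := exists_fixedPoint_primitive_prod hR1.le z₀ (radialSlope G hR.le)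
    (continuous_radialSlope hGM hR.le hMR.le hGL.continuous) (κ := ⟨K * L * R, by positivity⟩) hκ
    (dist_radialSlope_le hGM hR.le hMR.le hGL hK)
  refine ⟨radialSlope G hR.le f, continuous_radialSlope hGM hR.le hMR.le hGL.continuous f,
    fun s hs => ?_⟩
  rw [radialSlope, projIcc_of_mem hR.le hs]
  refine congrArg phiInv (radialMean_congr fun t ht => ?_)
  rw [IccExtend_of_mem hR.le f (uIcc_subset_Icc ⟨le_rfl, hR.le⟩ hs ht), hf]

section slopeEquation

variable {h F : ℝ → ℝ} {M R : ℝ} (hM : ∀ t, |h t| ≤ M)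
  (hF : ∀ s ∈ Icc 0 R, F s = phiInv (radialMean h s))
include hM hF

lemma abs_le_of_eq_phiInv_radialMean (hMR : M * R ≤ 1 / 2) {s : ℝ} (hs : s ∈ Icc 0 R) :
    |F s| ≤ 2 * (M * R) := by
  have hmean := abs_radialMean_le_of_mem_Icc hM hs
  rw [hF s hs]
  exact (abs_phiInv_le (hmean.trans hMR)).trans (by linarith)

lemma hasDerivAt_mul_div_sqrt_of_eq_phiInv (hh : Continuous h) (hMR : M * R < 1) {r : ℝ}
    (hr : r ∈ Ioo 0 R) : HasDerivAt (fun ρ => ρ * F ρ / √(1 + F ρ ^ 2)) (r * h r) r := by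
  refine (hasDerivAt_mul_radialMean hh hr.1.ne').congr_of_eventuallyEq ?_
  filter_upwards [Ioo_mem_nhds hr.1 hr.2] with ρ hρ
  have hρ' := Ioo_subset_Icc_self hρ
  rw [hF ρ hρ', mul_div_assoc,
    phiInv_div_sqrt_one_add_sq ((abs_radialMean_le_of_mem_Icc hM hρ').trans_lt hMR)]

lemma primitive_prod_mem_closedBall (hR : R ≤ 1) (hMR : M * R ≤ 1 / 2) (z₀ : ℝ) {t : ℝ}
    (ht : t ∈ Icc 0 R) :
    (z₀ + ∫ s in (0 : ℝ)..t, F s, F t) ∈ closedBall (z₀, 0) (2 * (M * R)) := by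
  have hFt := abs_le_of_eq_phiInv_radialMean hM hF hMR ht
  have hint : ‖∫ s in (0 : ℝ)..t, F s‖ ≤ 2 * (M * R) * |t - 0| :=
    norm_integral_le_of_norm_le_const fun s hs => by
      rw [uIoc_of_le ht.1] at hs
      exact abs_le_of_eq_phiInv_radialMean hM hF hMR ⟨hs.1.le, hs.2.trans ht.2⟩
  rw [sub_zero, abs_of_nonneg ht.1, Real.norm_eq_abs] at hint
  rw [mem_closedBall, Prod.dist_eq, Real.dist_eq, Real.dist_eq, add_sub_cancel_left, sub_zero]
  exact max_le (hint.trans (mul_le_of_le_one_right ((abs_nonneg _).trans hFt) (ht.2.trans hR)))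
    hFt

end slopeEquation

lemma exists_lipschitzWith_abs_le_eqOn_horoG {z₀ : ℝ} (hz₀ : 0 < z₀) :
    ∃ (G : ℝ × ℝ → ℝ) (M : ℝ) (L : ℝ≥0), LipschitzWith L G ∧ (∀ q, |G q| ≤ M) ∧
      EqOn (uncurry horoG) G (closedBall (z₀, 0) (z₀ / 2)) := by
  have hB : closedBall ((z₀, 0) : ℝ × ℝ) (z₀ / 2) ⊆ {q | q.1 ≠ 0} := fun q hq => by
    rw [mem_closedBall, Prod.dist_eq, Real.dist_eq] at hq
    have := (abs_le.1 ((le_max_left _ _).trans hq)).1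
    exact (by linarith : 0 < q.1).ne'
  exact (contDiffOn_uncurry_horoG.mono hB).exists_lipschitzWith_abs_le_eqOn
    (convex_closedBall _ _) (isCompact_closedBall _ _)


/-- Existence of spherical rotational horo-shrinkers meeting the rotation axis:
for every `z₀ > 0` there are `R > 0` and a `C¹` function `z` on `[0,R]` with
`z(0) = z₀`, `z'(0) = 0` which is a fixed point of the integral operator
`(Tz)(r) = z₀ + ∫₀^r φ⁻¹((1/s)∫₀^s t g(z,z') dt) ds`, and which consequently
solves `(r z'/√(1+z'²))' = 2r(1-z)/(z²√(1+z'²))` on `(0,R]`. -/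
theorem sphericalRotational_existence (z₀ : ℝ) (hz₀ : 0 < z₀) :
    ∃ R > 0, ∃ z : ℝ → ℝ,
      ContDiffOn ℝ 1 z (Set.Icc 0 R) ∧
      z 0 = z₀ ∧ deriv z 0 = 0 ∧
      (∀ r ∈ Set.Icc (0 : ℝ) R,
        z r = z₀ + ∫ s in (0 : ℝ)..r,
          phiInv ((1 / s) * ∫ t in (0 : ℝ)..s, t * horoG (z t) (deriv z t))) ∧
      (∀ r ∈ Set.Ioc (0 : ℝ) R,
        HasDerivAt (fun ρ => ρ * deriv z ρ / Real.sqrt (1 + (deriv z ρ) ^ 2))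
          (2 * r * (1 - z r) / ((z r) ^ 2 * Real.sqrt (1 + (deriv z r) ^ 2)))
          r) := by
  obtain ⟨G, M, L, hGL, hGM, hGB⟩ := exists_lipschitzWith_abs_le_eqOn_horoG hz₀
  have hsmall : ∀ᶠ R in 𝓝[>] (0 : ℝ), 0 < R ∧ R ≤ 1 ∧ M * R ≤ 1 / 2 ∧ M * R < z₀ / 4 := by
    filter_upwards [self_mem_nhdsWithin, eventually_nhdsGT_zero_mul_lt 1 one_pos,
      eventually_nhdsGT_zero_mul_lt M one_half_pos,
      eventually_nhdsGT_zero_mul_lt M (by positivity : 0 < z₀ / 4)] with R hR hR1 hMR hMRz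
    exact ⟨hR, by linarith, hMR.le, hMRz⟩
  obtain ⟨R, ⟨F, hF, hFeq⟩, hR, hR1, hMR, hMRz⟩ :=
    ((eventually_exists_radialSlope_solution hGM hGL z₀).and hsmall).exists
  set z : ℝ → ℝ := fun r => z₀ + ∫ s in (0 : ℝ)..r, F s
  have hz (r : ℝ) : HasDerivAt z (F r) r :=
    (hF.integral_hasStrictDerivAt 0 r).hasDerivAt.const_add z₀
  have hdz : deriv z = F := funext fun r => (hz r).deriv
  have hGz : ∀ t ∈ Icc 0 R, G (z t, F t) = horoG (z t) (deriv z t) := fun t ht => by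
    have hball := primitive_prod_mem_closedBall (fun _ => hGM _) hFeq hR1 hMR z₀ ht
    rw [hdz]
    exact (hGB (closedBall_subset_closedBall (by linarith) hball)).symm
  have h0 : (0 : ℝ) ∈ Icc 0 R := ⟨le_rfl, hR.le⟩
  have hR2 : Icc 0 (R / 2) ⊆ Icc 0 R := Icc_subset_Icc_right (by linarith)
  -- Halving `R` puts each `r ∈ (0, R / 2]` in the interior of `[0, R]`, as `HasDerivAt` needs.
  refine ⟨R / 2, by positivity, z, ?_, by simp [z], ?_, fun r hr => ?_, fun r hr => ?_⟩
  · exact (contDiff_one_iff_deriv.2 ⟨fun r => (hz r).differentiableAt, hdz ▸ hF⟩).contDiffOn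
  · rw [hdz, hFeq 0 h0, radialMean_zero, phiInv_zero]
  · refine congrArg (z₀ + ·) (integral_congr fun s hs => ?_)
    have hs' := uIcc_subset_Icc h0 (hR2 hr) hs
    exact (hFeq s hs').trans (congrArg phiInv
      (radialMean_congr fun t ht => hGz t (uIcc_subset_Icc h0 hs' ht)))
  · have hr' : r ∈ Ioo 0 R := ⟨hr.1, by linarith [hr.2]⟩
    have hzc : Continuous z := continuous_iff_continuousAt.2 fun r => (hz r).continuousAt
    have := hasDerivAt_mul_div_sqrt_of_eq_phiInv (h := fun t => G (z t, F t)) (fun _ => hGM _)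
      hFeq (hGL.continuous.comp (hzc.prodMk hF)) (hMR.trans_lt (by norm_num)) hr'
    rw [hdz]
    convert this using 1
    rw [hGz r (Ioo_subset_Icc_self hr'), hdz, horoG]
    ring
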